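/- arXiv:cond-mat/0503087 — 4 statements merged into one kernel-verified Lean document; each statement's English description precedes it below -/
import Mathlib

section
/- For any natural numbers s, m and reals p, Δ with 0 ≤ p, p + Δ ≤ 1, and Δ ≥ 0, the difference in binomial point probabilities satisfies |P(Bin(s,p) = m) − P(Bin(s,p+Δ) = m)| ≤ s·Δ. -/
/-! The binomial probability `C(s,m) p^m (1-p)^(s-m)` is the Bernstein polynomial `b_{s,m}` at `p`.
Its derivative is `b'_{s,m} = s (b_{s-1,m-1} - b_{s-1,m})`, and Bernstein polynomials take values
in `[0,1]` on `[0,1]` (they are nonnegative and sum to one), so `|b'_{s,m}| ≤ s` there and the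
mean value inequality bounds the change over `[p, p + Δ]` by `s Δ`. -/

open Polynomial Set

namespace bernsteinPolynomial

theorem eval_eq {R : Type*} [CommRing R] (n ν : ℕ) (x : R) :
    (bernsteinPolynomial R n ν).eval x = n.choose ν * x ^ ν * (1 - x) ^ (n - ν) := by
  simp [bernsteinPolynomial]

variable {n ν : ℕ} {x : ℝ}

theorem eval_nonneg (hx : x ∈ Icc (0 : ℝ) 1) : 0 ≤ (bernsteinPolynomial ℝ n ν).eval x := by
  obtain ⟨hx₀, hx₁⟩ := hx
  have : 0 ≤ 1 - x := sub_nonneg.2 hx₁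
  rw [eval_eq]
  positivity

theorem eval_le_one (hx : x ∈ Icc (0 : ℝ) 1) : (bernsteinPolynomial ℝ n ν).eval x ≤ 1 := by
  rcases lt_or_ge n ν with hnν | hνn
  · simp [eq_zero_of_lt ℝ hnν]
  calc (bernsteinPolynomial ℝ n ν).eval x
      ≤ ∑ k ∈ Finset.range (n + 1), (bernsteinPolynomial ℝ n k).eval x :=
        Finset.single_le_sum (f := fun k => (bernsteinPolynomial ℝ n k).eval x)
          (fun k _ => eval_nonneg hx) (Finset.mem_range_succ_iff.2 hνn)
    _ = 1 := by rw [← eval_finsetSum, sum, eval_one]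

theorem abs_eval_derivative_le (hx : x ∈ Icc (0 : ℝ) 1) :
    |(derivative (bernsteinPolynomial ℝ n ν)).eval x| ≤ n := by
  cases ν with
  | zero =>
    rw [derivative_zero, eval_mul, abs_mul, abs_of_nonneg (eval_nonneg hx)]
    simpa using mul_le_of_le_one_right n.cast_nonneg (eval_le_one hx)
  | succ ν =>
    rw [derivative_succ, eval_mul, abs_mul, eval_sub, eval_natCast, Nat.abs_cast]
    exact mul_le_of_le_one_right n.cast_nonneg <|
      abs_sub_le_of_nonneg_of_le (eval_nonneg hx) (eval_le_one hx) (eval_nonneg hx) (eval_le_one hx)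

theorem abs_eval_sub_eval_le {y : ℝ} (hx : x ∈ Icc (0 : ℝ) 1) (hy : y ∈ Icc (0 : ℝ) 1) :
    |(bernsteinPolynomial ℝ n ν).eval x - (bernsteinPolynomial ℝ n ν).eval y| ≤
      n * |x - y| := by
  simpa only [Real.norm_eq_abs, Polynomial.deriv] using
    (convex_Icc (0 : ℝ) 1).norm_image_sub_le_of_norm_deriv_le
      (fun z _ => (bernsteinPolynomial ℝ n ν).differentiableAt)
      (fun z hz => by
        simpa only [Real.norm_eq_abs, Polynomial.deriv] using abs_eval_derivative_le hz) hy hx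

end bernsteinPolynomial

theorem binomial_pmf_diff (s m : ℕ) (p Δ : ℝ) (hp : 0 ≤ p) (hpd : p + Δ ≤ 1)
    (hΔ : 0 ≤ Δ) :
    |(s.choose m : ℝ) * p ^ m * (1 - p) ^ (s - m) -
      (s.choose m : ℝ) * (p + Δ) ^ m * (1 - (p + Δ)) ^ (s - m)| ≤ s * Δ := by
  simp only [← bernsteinPolynomial.eval_eq]
  calc _ ≤ s * |p - (p + Δ)| :=
        bernsteinPolynomial.abs_eval_sub_eval_le ⟨hp, by linarith⟩ ⟨by linarith, hpd⟩
    _ = s * Δ := by rw [sub_add_cancel_left, abs_neg, abs_of_nonneg hΔ]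
end

section
/- For a δ-regular degree distribution (g(z) = z^δ with integer δ ≥ 3), the generating function of the observed degree distribution, g^obs(z) = z·δ·∫_0^1 t^{δ−1}·(1 − (1−z)·t^{δ(δ−2)})^{δ−1} dt, has coefficients a^obs_{m+1} = Γ(δ)·Γ(m + 1/(δ−2)) / (Γ(δ + 1/(δ−2))·(δ−2)·m!) for 0 ≤ m ≤ δ−1, and a^obs_{m+1} = 0 for m ≥ δ. -/
/-!
Writing `1 - (1 - z) s = z s + (1 - s)` with `s = t ^ N`, `N = δ (δ - 2)`, the binomial theorem
turns the coefficient of `z ^ m` into the Beta-type integral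
`∫₀¹ t ^ (δ - 1 + N m) (1 - t ^ N) ^ (δ - 1 - m) dt = B(m + 1/(δ - 2), δ - m) / N`.
Since the second Beta argument is a positive integer, it is evaluated by expanding
`(1 - t ^ N) ^ j` once more and using the partial fraction identity
`∑ₖ (-1)ᵏ C(j, k) / (x + k) = j! Γ(x) / Γ(x + j + 1)`.
-/

open Finset Real Nat

theorem sum_range_choose_mul_neg_one_pow_div_add {x : ℝ} (hx : 0 < x) (n : ℕ) :
    ∑ k ∈ range (n + 1), (n.choose k : ℝ) * ((-1) ^ k / (x + k)) =
      n ! * Gamma x / Gamma (x + n + 1) := by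
  induction n generalizing x with
  | zero =>
    simp [Gamma_add_one hx.ne', div_mul_cancel_right₀ (Gamma_pos_of_pos hx).ne']
  | succ n ih =>
    have hshift : ∑ k ∈ range (n + 1), (n.choose k : ℝ) * ((-1) ^ (k + 1) / (x + ↑(k + 1))) =
        -(n ! * Gamma (x + 1) / Gamma (x + 1 + n + 1)) := by
      rw [← ih (by positivity), ← sum_neg_distrib]
      refine sum_congr rfl fun k _ => ?_
      push_cast
      ring
    have hΓx : Gamma (x + 1) = x * Gamma x := Gamma_add_one hx.ne'
    have hΓn : Gamma (x + n + 1 + 1) = (x + n + 1) * Gamma (x + n + 1) :=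
      Gamma_add_one (by positivity)
    -- Pascal's rule: the sum for `n + 1` at `x` is the sum for `n` at `x` minus that at `x + 1`.
    rw [sum_choose_succ_mul (fun i _ => (-1 : ℝ) ^ i / (x + i)), ih hx, hshift, hΓx,
      show x + 1 + n + 1 = x + n + 1 + 1 by ring,
      show x + ↑(n + 1) + 1 = x + n + 1 + 1 by push_cast; ring, hΓn, factorial_succ]
    field_simp
    push_cast
    ring

theorem integral_pow_mul_one_sub_pow_pow_eq_sum (p N n : ℕ) :
    ∫ t in (0 : ℝ)..1, t ^ p * (1 - t ^ N) ^ n =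
      ∑ k ∈ range (n + 1), (n.choose k : ℝ) * ((-1) ^ k / (p + N * k + 1)) := by
  have hexpand : ∀ t : ℝ, t ^ p * (1 - t ^ N) ^ n =
      ∑ k ∈ range (n + 1), (n.choose k : ℝ) * (-1) ^ k * t ^ (p + N * k) := by
    intro t
    rw [sub_eq_neg_add, add_pow, mul_sum]
    refine sum_congr rfl fun k _ => ?_
    rw [neg_pow, pow_add, pow_mul]
    ring
  simp_rw [hexpand]
  rw [intervalIntegral.integral_finsetSum fun k _ =>
    (by fun_prop : Continuous _).intervalIntegrable _ _]
  refine sum_congr rfl fun k _ => ?_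
  rw [intervalIntegral.integral_const_mul, integral_pow]
  push_cast
  ring

theorem integral_pow_mul_one_sub_pow_pow {N : ℕ} (hN : 0 < N) (p n : ℕ) :
    ∫ t in (0 : ℝ)..1, t ^ p * (1 - t ^ N) ^ n =
      n ! * Gamma ((p + 1) / N) / (N * Gamma ((p + 1) / N + n + 1)) := by
  have hN' : (0 : ℝ) < N := by exact_mod_cast hN
  rw [integral_pow_mul_one_sub_pow_pow_eq_sum, div_mul_eq_div_div_swap,
    ← sum_range_choose_mul_neg_one_pow_div_add (by positivity), sum_div]
  refine sum_congr rfl fun k _ => ?_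
  field_simp
  ring

theorem pow_mul_one_sub_mul_pow_pow_eq_sum (a N n : ℕ) (z t : ℝ) :
    t ^ a * (1 - (1 - z) * t ^ N) ^ n =
      ∑ m ∈ range (n + 1),
        n.choose m * z ^ m * (t ^ (a + N * m) * (1 - t ^ N) ^ (n - m)) := by
  rw [show 1 - (1 - z) * t ^ N = z * t ^ N + (1 - t ^ N) by ring, add_pow, mul_sum]
  refine sum_congr rfl fun m _ => ?_
  rw [pow_add, pow_mul, mul_pow]
  ring

theorem integral_pow_mul_one_sub_mul_pow_pow {N : ℕ} (hN : 0 < N) (a n : ℕ) (z : ℝ) :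
    ∫ t in (0 : ℝ)..1, t ^ a * (1 - (1 - z) * t ^ N) ^ n =
      ∑ m ∈ range (n + 1), n ! * Gamma ((a + 1) / N + m) /
        (N * m ! * Gamma ((a + 1) / N + n + 1)) * z ^ m := by
  simp_rw [pow_mul_one_sub_mul_pow_pow_eq_sum]
  rw [intervalIntegral.integral_finsetSum fun m _ =>
    (by fun_prop : Continuous _).intervalIntegrable _ _]
  refine sum_congr rfl fun m hm => ?_
  have hmn : m ≤ n := Nat.lt_succ_iff.mp (mem_range.mp hm)
  have hx : ((a + N * m : ℕ) + 1 : ℝ) / N = (a + 1) / N + m := by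
    push_cast; field_simp; ring
  have hchoose : (n.choose m * m ! * (n - m)! : ℝ) = n ! := by
    exact_mod_cast Nat.choose_mul_factorial_mul_factorial hmn
  rw [intervalIntegral.integral_const_mul, integral_pow_mul_one_sub_pow_pow hN, hx,
    add_assoc _ (m : ℝ), ← Nat.cast_add, Nat.add_sub_cancel' hmn, ← hchoose]
  field_simp

theorem regular_graph_observed_degrees (δ : ℕ) (hδ : 3 ≤ δ) :
    ∀ z : ℝ,
      z * δ * ∫ t in (0 : ℝ)..1,
          t ^ (δ - 1) * (1 - (1 - z) * t ^ (δ * (δ - 2))) ^ (δ - 1)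
        = ∑ m ∈ Finset.range δ,
            (Real.Gamma δ * Real.Gamma (m + 1 / ((δ : ℝ) - 2)) /
              (Real.Gamma (δ + 1 / ((δ : ℝ) - 2)) * ((δ : ℝ) - 2) * (Nat.factorial m)))
              * z ^ (m + 1) := by
  intro z
  have hδ1 : ((δ - 1 : ℕ) : ℝ) = δ - 1 := by
    push_cast [Nat.cast_sub (by omega : 1 ≤ δ)]; ring
  have hδ2 : (0 : ℝ) < δ - 2 := by
    have : (3 : ℝ) ≤ δ := by exact_mod_cast hδ
    linarith
  have hN : ((δ * (δ - 2) : ℕ) : ℝ) = δ * (δ - 2) := by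
    push_cast [Nat.cast_sub (by omega : 2 ≤ δ)]; ring
  have hx : (((δ - 1 : ℕ) : ℝ) + 1) / ((δ * (δ - 2) : ℕ) : ℝ) = 1 / ((δ : ℝ) - 2) := by
    rw [hδ1, hN]; field_simp; ring
  have hΓ : Real.Gamma δ = (δ - 1)! := by
    rw [← Real.Gamma_nat_eq_factorial, hδ1, sub_add_cancel]
  rw [integral_pow_mul_one_sub_mul_pow_pow (Nat.mul_pos (by omega) (by omega)), hx,
    Nat.sub_add_cancel (by omega : 1 ≤ δ), mul_sum]
  refine sum_congr rfl fun m _ => ?_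
  rw [hΓ, hδ1, hN, show 1 / ((δ : ℝ) - 2) + (δ - 1) + 1 = δ + 1 / ((δ : ℝ) - 2) by ring,
    add_comm (1 / ((δ : ℝ) - 2))]
  field_simp
  ring
end

section
/- Let δ ≥ 3 be an integer and a^obs_{m+1} = Γ(δ)·Γ(m + 1/(δ−2)) / (Γ(δ + 1/(δ−2))·(δ−2)·m!). Then for all 2 ≤ m ≤ δ−1, m^{−1} / (δ^{1/(δ−2)}·(δ−2)) < a^obs_{m+1} < m^{−1 + 1/(δ−2)} / (δ−2). -/
/-!
Put `ε = 1/(δ-2) ∈ (0, 1]`. Using `m! = m Γ(m)`, the coefficient equals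
`(Γ(m+ε)/Γ(m)) / ((Γ(δ+ε)/Γ(δ)) (δ-2) m)`. Both Gamma ratios lie in `(1, x^ε]`: they exceed `1`
because `Γ` is strictly increasing on `[2, ∞)`, and log-convexity of `Γ` between `x` and `x + 1`
gives `Γ(x+ε) ≤ Γ(x)^(1-ε) Γ(x+1)^ε = x^ε Γ(x)`. Bounding the numerator ratio by `1` and the
denominator ratio by `δ^ε` gives the lower bound; bounding them the other way gives the upper one.
-/

namespace Real

theorem Gamma_add_le_rpow_mul_Gamma {x ε : ℝ} (hx : 0 < x) (hε0 : 0 ≤ ε) (hε1 : ε ≤ 1) :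
    Gamma (x + ε) ≤ x ^ ε * Gamma x := by
  have hΓx := Gamma_pos_of_pos hx
  have hconv := convexOn_log_Gamma.2 (Set.mem_Ioi.mpr hx)
    (Set.mem_Ioi.mpr (by linarith : 0 < x + 1)) (sub_nonneg.mpr hε1) hε0 (by ring)
  rw [smul_eq_mul, smul_eq_mul, show (1 - ε) * x + ε * (x + 1) = x + ε by ring] at hconv
  simp only [Function.comp_apply, Gamma_add_one hx.ne'] at hconv
  calc Gamma (x + ε) = exp (log (Gamma (x + ε))) :=
        (exp_log (Gamma_pos_of_pos (by linarith))).symm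
    _ ≤ exp ((1 - ε) * log (Gamma x) + ε * log (x * Gamma x)) := exp_le_exp.mpr hconv
    _ = x ^ ε * Gamma x := by
        rw [log_mul hx.ne' hΓx.ne',
          show (1 - ε) * log (Gamma x) + ε * (log x + log (Gamma x)) = log x * ε + log (Gamma x)
            by ring, exp_add, exp_log hΓx, ← rpow_def_of_pos hx]

theorem one_lt_Gamma_add_div_Gamma {x ε : ℝ} (hx : 2 ≤ x) (hε : 0 < ε) :
    1 < Gamma (x + ε) / Gamma x := by
  rw [one_lt_div (Gamma_pos_of_pos (by linarith))]
  exact Gamma_strictMonoOn_Ici (Set.mem_Ici.mpr hx) (Set.mem_Ici.mpr (by linarith))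
    (by linarith)

theorem Gamma_add_div_Gamma_le_rpow {x ε : ℝ} (hx : 0 < x) (hε0 : 0 ≤ ε) (hε1 : ε ≤ 1) :
    Gamma (x + ε) / Gamma x ≤ x ^ ε :=
  (div_le_iff₀ (Gamma_pos_of_pos hx)).mpr (Gamma_add_le_rpow_mul_Gamma hx hε0 hε1)

theorem Gamma_mul_Gamma_div_factorial_eq {x ε c : ℝ} (hx : 0 < x) {n : ℕ} (hn : 0 < n) :
    Gamma x * Gamma (n + ε) / (Gamma (x + ε) * c * n.factorial)
      = (Gamma (n + ε) / Gamma n) / (Gamma (x + ε) / Gamma x * c * n) := by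
  have hn' : (0 : ℝ) < n := by exact_mod_cast hn
  have := Gamma_pos_of_pos hx
  have := Gamma_pos_of_pos hn'
  rw [← Gamma_nat_eq_factorial, Gamma_add_one hn'.ne']
  field_simp

end Real

theorem regular_powerlaw_sandwich_general (δ m : ℕ) (hδ : 3 ≤ δ) (hm : 2 ≤ m) :
    (m : ℝ) ^ (-(1 : ℝ)) / ((δ : ℝ) ^ ((1 : ℝ) / ((δ : ℝ) - 2)) * ((δ : ℝ) - 2)) <
      Real.Gamma δ * Real.Gamma (m + 1 / ((δ : ℝ) - 2)) /
        (Real.Gamma (δ + 1 / ((δ : ℝ) - 2)) * ((δ : ℝ) - 2) * (Nat.factorial m)) ∧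
    Real.Gamma δ * Real.Gamma (m + 1 / ((δ : ℝ) - 2)) /
        (Real.Gamma (δ + 1 / ((δ : ℝ) - 2)) * ((δ : ℝ) - 2) * (Nat.factorial m)) <
      (m : ℝ) ^ (-1 + (1 : ℝ) / ((δ : ℝ) - 2)) / ((δ : ℝ) - 2) := by
  have hδR : (3 : ℝ) ≤ δ := by exact_mod_cast hδ
  have hmR : (2 : ℝ) ≤ m := by exact_mod_cast hm
  have hm0 : (0 : ℝ) < m := by linarith
  have hc : (0 : ℝ) < δ - 2 := by linarith
  set ε : ℝ := 1 / ((δ : ℝ) - 2)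
  have hε0 : 0 < ε := by positivity
  have hε1 : ε ≤ 1 := (div_le_one hc).mpr (by linarith)
  have hA1 := Real.one_lt_Gamma_add_div_Gamma hmR hε0
  have hAm := Real.Gamma_add_div_Gamma_le_rpow hm0 hε0.le hε1
  have hB1 := Real.one_lt_Gamma_add_div_Gamma (by linarith : (2 : ℝ) ≤ δ) hε0
  have hBδ := Real.Gamma_add_div_Gamma_le_rpow (by linarith : (0 : ℝ) < δ) hε0.le hε1
  rw [Real.Gamma_mul_Gamma_div_factorial_eq (by linarith) (by omega), Real.rpow_neg_one,
    Real.rpow_add hm0, Real.rpow_neg_one]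
  set A := Real.Gamma (m + ε) / Real.Gamma m
  set B := Real.Gamma (δ + ε) / Real.Gamma δ
  constructor
  · calc (m : ℝ)⁻¹ / ((δ : ℝ) ^ ε * (δ - 2)) = 1 / ((δ : ℝ) ^ ε * (δ - 2) * m) := by
          field_simp
      _ ≤ 1 / (B * (δ - 2) * m) := by gcongr
      _ < A / (B * (δ - 2) * m) := by gcongr
  · calc A / (B * (δ - 2) * m) < A / (1 * (δ - 2) * m) := by gcongr
      _ ≤ (m : ℝ) ^ ε / (1 * (δ - 2) * m) := by gcongr
      _ = (m : ℝ)⁻¹ * (m : ℝ) ^ ε / (δ - 2) := by field_simp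

theorem regular_powerlaw_sandwich (δ m : ℕ) (hδ : 3 ≤ δ) (hm : 2 ≤ m)
    (hmδ : m ≤ δ - 1) :
    (m : ℝ) ^ (-(1 : ℝ)) / ((δ : ℝ) ^ ((1 : ℝ) / ((δ : ℝ) - 2)) * ((δ : ℝ) - 2)) <
      Real.Gamma δ * Real.Gamma (m + 1 / ((δ : ℝ) - 2)) /
        (Real.Gamma (δ + 1 / ((δ : ℝ) - 2)) * ((δ : ℝ) - 2) * (Nat.factorial m)) ∧
    Real.Gamma δ * Real.Gamma (m + 1 / ((δ : ℝ) - 2)) /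
        (Real.Gamma (δ + 1 / ((δ : ℝ) - 2)) * ((δ : ℝ) - 2) * (Nat.factorial m)) <
      (m : ℝ) ^ (-1 + (1 : ℝ) / ((δ : ℝ) - 2)) / ((δ : ℝ) - 2) :=
  regular_powerlaw_sandwich_general δ m hδ hm
end

section
/- For δ > 0 and z ∈ [0,1), Ei(−δ(1−z)) = Ei(−δ) − Σ_{k=1}^∞ (Γ(k,δ)/Γ(k))·(z^k/k), where Γ(k,δ) = ∫_δ^∞ x^{k−1} e^{−x} dx is the upper incomplete Gamma function. -/
/-!
Substituting `s = (1 - z) t` in the integral defining `Ei (-δ (1 - z))` gives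
`Ei (-δ (1 - z)) - Ei (-δ) = -∫_δ^∞ e^{-t} (e^{z t} - 1) / t dt`.
Expanding `e^{z t} - 1` yields the nonnegative terms `z^{k+1} t^k e^{-t} / (k+1)!`, whose
integrals over `(δ, ∞)` are `Γ(k+1, δ) / Γ(k+1) · z^{k+1} / (k+1) ≤ z^{k+1}`. The series of
integrals is therefore dominated by a geometric series, which justifies exchanging sum and integral.
-/

/-- Exponential integral Ei(z) = -∫_{-z}^∞ e^{-x}/x dx. -/
noncomputable def Ei (z : ℝ) : ℝ := -∫ x in Set.Ioi (-z), Real.exp (-x) / x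

/-- Upper incomplete Gamma function Γ(a, x) = ∫_x^∞ t^{a-1} e^{-t} dt. -/
noncomputable def GammaInc (a x : ℝ) : ℝ :=
  ∫ t in Set.Ioi x, t ^ (a - 1) * Real.exp (-t)

open MeasureTheory Set Real
open scoped Nat

lemma GammaInc_natCast_add_one (k : ℕ) (x : ℝ) :
    GammaInc (k + 1) x = ∫ t in Ioi x, t ^ k * exp (-t) := by
  simp only [GammaInc, add_sub_cancel_right, rpow_natCast]

lemma integrableOn_rpow_mul_exp_neg_Ioi {a x : ℝ} (ha : 0 < a) (hx : 0 ≤ x) :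
    IntegrableOn (fun t ↦ t ^ (a - 1) * exp (-t)) (Ioi x) := by
  simpa only [mul_comm] using (GammaIntegral_convergent ha).mono_set (Ioi_subset_Ioi hx)

lemma GammaInc_le_Gamma {a x : ℝ} (ha : 0 < a) (hx : 0 ≤ x) : GammaInc a x ≤ Gamma a := by
  rw [Gamma_eq_integral ha, GammaInc]
  simp_rw [mul_comm (exp _)]
  refine setIntegral_mono_set (integrableOn_rpow_mul_exp_neg_Ioi ha le_rfl) ?_
    (Ioi_subset_Ioi hx).eventuallyLE
  filter_upwards [ae_restrict_mem measurableSet_Ioi] with t (ht : 0 < t)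
  positivity

lemma GammaInc_nonneg (a : ℝ) {x : ℝ} (hx : 0 ≤ x) : 0 ≤ GammaInc a x :=
  setIntegral_nonneg measurableSet_Ioi fun t (ht : x < t) ↦ by
    have : 0 < t := hx.trans_lt ht
    positivity

lemma summable_GammaInc_div_Gamma_mul_pow {x z : ℝ} (hx : 0 ≤ x) (hz₀ : 0 ≤ z) (hz₁ : z < 1) :
    Summable fun k : ℕ ↦ GammaInc (k + 1) x / Gamma (k + 1) * (z ^ (k + 1) / (k + 1)) := by
  refine .of_nonneg_of_le (fun k ↦ by have := GammaInc_nonneg (k + 1) hx; positivity)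
    (fun k ↦ ?_) ((summable_nat_add_iff 1).mpr (summable_geometric_of_lt_one hz₀ hz₁))
  have hratio : GammaInc (k + 1) x / Gamma (k + 1) ≤ 1 :=
    div_le_one_of_le₀ (GammaInc_le_Gamma (by positivity) hx) (Gamma_pos_of_pos (by positivity)).le
  have hpow : z ^ (k + 1) / (k + 1) ≤ z ^ (k + 1) :=
    div_le_self (by positivity) (by simp)
  calc GammaInc (k + 1) x / Gamma (k + 1) * (z ^ (k + 1) / (k + 1))
      ≤ 1 * (z ^ (k + 1) / (k + 1)) := by gcongr
    _ ≤ z ^ (k + 1) := by rwa [one_mul]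

lemma hasSum_pow_mul_exp_neg (z : ℝ) {t : ℝ} (ht : t ≠ 0) :
    HasSum (fun k : ℕ ↦ z ^ (k + 1) / (k + 1)! * (t ^ k * exp (-t)))
      (exp (-((1 - z) * t)) / t - exp (-t) / t) := by
  have hexp : HasSum (fun n : ℕ ↦ (z * t) ^ n / n !) (exp (z * t)) := by
    rw [exp_eq_exp_ℝ]
    exact NormedSpace.expSeries_div_hasSum_exp (z * t)
  have hsplit : exp (-((1 - z) * t)) / t - exp (-t) / t = exp (-t) / t * (exp (z * t) - 1) := by
    rw [mul_sub, div_mul_eq_mul_div, ← exp_add]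
    ring_nf
  have htail := ((hasSum_nat_add_iff' 1).mpr hexp).mul_left (exp (-t) / t)
  rw [Finset.sum_range_one, pow_zero, Nat.factorial_zero, Nat.cast_one, div_one] at htail
  rw [hsplit]
  refine htail.congr_fun fun k ↦ ?_
  field_simp
  ring

lemma integrableOn_exp_neg_mul_div_Ioi {c x : ℝ} (hc : 0 < c) (hx : 0 < x) :
    IntegrableOn (fun t ↦ exp (-(c * t)) / t) (Ioi x) := by
  have hdom : IntegrableOn (fun t ↦ exp (-(c * t)) / x) (Ioi x) := by
    have hexp : IntegrableOn (fun t ↦ exp (-(c * t))) (Ioi x) := by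
      simpa only [neg_mul] using exp_neg_integrableOn_Ioi x hc
    exact hexp.div_const x
  refine hdom.mono' ?_ ?_
  · exact ((by fun_prop : Continuous fun t ↦ exp (-(c * t))).continuousOn.div continuousOn_id
      fun t (ht : x < t) ↦ (hx.trans ht).ne').aestronglyMeasurable measurableSet_Ioi
  · filter_upwards [ae_restrict_mem measurableSet_Ioi] with t (ht : x < t)
    rw [norm_of_nonneg (div_nonneg (exp_pos _).le (hx.trans ht).le)]
    exact div_le_div_of_nonneg_left (exp_pos _).le hx ht.le

lemma Ei_neg_mul (x : ℝ) {c : ℝ} (hc : 0 < c) :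
    Ei (-(x * c)) = -∫ t in Ioi x, exp (-(c * t)) / t := by
  have hscale := integral_comp_mul_left_Ioi (fun t ↦ exp (-t) / t) x hc
  simp only [mul_inv, div_eq_mul_inv, smul_eq_mul] at hscale
  simp_rw [mul_left_comm _ c⁻¹, integral_const_mul] at hscale
  simp only [Ei, neg_neg, mul_comm x c, div_eq_mul_inv,
    mul_left_cancel₀ (inv_ne_zero hc.ne') hscale]

lemma hasSum_GammaInc_div_Gamma_mul_pow {x z : ℝ} (hx : 0 < x) (hz₀ : 0 ≤ z) (hz₁ : z < 1) :
    HasSum (fun k : ℕ ↦ GammaInc (k + 1) x / Gamma (k + 1) * (z ^ (k + 1) / (k + 1)))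
      ((∫ t in Ioi x, exp (-((1 - z) * t)) / t) - ∫ t in Ioi x, exp (-t) / t) := by
  set F : ℕ → ℝ → ℝ := fun k t ↦ z ^ (k + 1) / (k + 1)! * (t ^ k * exp (-t))
  have hF_int (k : ℕ) : IntegrableOn (F k) (Ioi x) := by
    have : IntegrableOn (fun t ↦ t ^ k * exp (-t)) (Ioi x) := by
      simpa only [add_sub_cancel_right, rpow_natCast] using
        integrableOn_rpow_mul_exp_neg_Ioi (a := k + 1) (by positivity) hx.le
    exact this.const_mul _
  have hF_integral (k : ℕ) : ∫ t in Ioi x, F k t =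
      GammaInc (k + 1) x / Gamma (k + 1) * (z ^ (k + 1) / (k + 1)) := by
    rw [integral_const_mul, ← GammaInc_natCast_add_one, Gamma_nat_eq_factorial,
      Nat.factorial_succ]
    push_cast
    field_simp
  have hF_norm (k : ℕ) : ∫ t in Ioi x, ‖F k t‖ = ∫ t in Ioi x, F k t :=
    setIntegral_congr_fun measurableSet_Ioi fun t (ht : x < t) ↦
      norm_of_nonneg (by have := hx.trans ht; positivity)
  have hF_tsum : ∫ t in Ioi x, ∑' k, F k t =
      ∫ t in Ioi x, (exp (-((1 - z) * t)) / t - exp (-t) / t) :=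
    setIntegral_congr_fun measurableSet_Ioi fun t (ht : x < t) ↦
      (hasSum_pow_mul_exp_neg z (hx.trans ht).ne').tsum_eq
  have hsum := hasSum_integral_of_summable_integral_norm hF_int <| by
    simpa only [hF_norm, hF_integral] using summable_GammaInc_div_Gamma_mul_pow hx.le hz₀ hz₁
  have hexp_div : IntegrableOn (fun t ↦ exp (-t) / t) (Ioi x) := by
    simpa only [one_mul] using integrableOn_exp_neg_mul_div_Ioi one_pos hx
  rw [← integral_sub (integrableOn_exp_neg_mul_div_Ioi (by linarith) hx) hexp_div]
  simpa only [hF_integral, hF_tsum] using hsum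

theorem Ei_taylor_series (δ z : ℝ) (hδ : 0 < δ) (hz : z ∈ Set.Ico (0 : ℝ) 1) :
    Ei (-δ * (1 - z)) =
      Ei (-δ) - ∑' k : ℕ,
        (GammaInc (k + 1) δ / Real.Gamma (k + 1)) * (z ^ (k + 1) / (k + 1)) := by
  obtain ⟨hz₀, hz₁⟩ := hz
  rw [neg_mul, Ei_neg_mul δ (by linarith), Ei, neg_neg,
    (hasSum_GammaInc_div_Gamma_mul_pow hδ hz₀ hz₁).tsum_eq]
  ring
end
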